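/- Let (t_n)_{n≥1} be a strictly decreasing sequence of positive reals with t_n → 0. Then the Minkowski dimension of the set {t_n : n ≥ 1} equals the infimum of all a > 0 such that ∑_{n=1}^∞ (t_n − t_{n+1})^a < ∞. -/

import Mathlib

/-
Write `d n = t n - t (n + 1)`. If `∑ d n ^ a < ∞` with `a ≤ 1`, the open `δ`-neighbourhood of
`{t n}` has measure at most `3δ + 2 ∑ min (d n) δ ≤ 3δ + 2 δ ^ (1 - a) ∑ d n ^ a`, while every box
`[kδ, (k+1)δ]` meeting the set contributes its interior to that neighbourhood; hence
`N(E, δ) = O(δ ^ (-a))`. Conversely, the points `t n` followed by a gap `d n ≥ δ` are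
`δ`-separated, so they lie in distinct boxes and `#{n | δ ≤ d n} ≤ N(E, δ) ≤ C δ ^ (-a)`. Grouping
the gaps dyadically, `d n ∈ (2^(-j-1), 2^(-j)]`, then bounds `∑ d n ^ b` by a geometric series
for every `b > a`.
-/

open MeasureTheory

/-- The `δ`-entropy number `N(E,δ) = #{k ∈ ℕ : E ∩ [kδ,(k+1)δ] ≠ ∅}`. -/
noncomputable def entropyNum (E : Set ℝ) (δ : ℝ) : ℕ :=
  Set.ncard {k : ℕ | (E ∩ Set.Icc (k * δ) ((k + 1) * δ)).Nonempty}

/-- The (upper) Minkowski dimension of a bounded set `E ⊆ ℝ`. -/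
noncomputable def minkowskiDim (E : Set ℝ) : ℝ :=
  sInf {a : ℝ | 0 < a ∧ ∃ C : ℝ, 0 < C ∧
    ∀ δ ∈ Set.Ioc (0 : ℝ) 1, (entropyNum E δ : ℝ) ≤ C * δ ^ (-a)}

open Filter Function Topology Set
open scoped ENNReal

lemma csInf_eq_csInf_of_subset_of_forall_lt_mem {L R : Set ℝ} (hR : R.Nonempty)
    (hL : BddBelow L) (hRL : R ⊆ L) (hLR : ∀ a ∈ L, ∀ b, a < b → b ∈ R) :
    sInf L = sInf R :=
  le_antisymm (csInf_le_csInf hL hR hRL) <| le_csInf (hR.mono hRL) fun a ha =>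
    le_of_forall_gt_imp_ge_of_dense fun b hab => csInf_le (hL.mono hRL) (hLR a ha b hab)

lemma Antitone.summable_sub_succ {t : ℕ → ℝ} (ht : Antitone t) {l : ℝ}
    (hlim : Tendsto t atTop (𝓝 l)) : Summable fun n => t n - t (n + 1) :=
  ((hasSum_iff_tendsto_nat_of_nonneg (fun n => sub_nonneg.2 (ht n.le_succ)) _).2 <| by
    simp_rw [Finset.sum_range_sub']
    exact tendsto_const_nhds.sub hlim).summable

lemma entropyNum_mul_le_volume_thickening (E : Set ℝ) {δ : ℝ} (hδ : 0 < δ) :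
    (entropyNum E δ : ℝ≥0∞) * ENNReal.ofReal δ ≤ volume (Metric.thickening δ E) := by
  set K := {k : ℕ | (E ∩ Icc (k * δ) ((k + 1) * δ)).Nonempty}
  rcases K.finite_or_infinite.symm with hK | hK
  · -- `Set.ncard` is `0` on infinite sets
    simp [entropyNum, K, hK.ncard]
  have hmono : Monotone fun k : ℕ => (k : ℝ) * δ :=
    fun i j hij => mul_le_mul_of_nonneg_right (Nat.cast_le.2 hij) hδ.le
  have hdisj : Pairwise (Disjoint on fun k : ℕ => Ioo (k * δ) ((k + 1) * δ)) := by
    simpa [Order.succ_eq_add_one] using hmono.pairwise_disjoint_on_Ioo_succ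
  calc (entropyNum E δ : ℝ≥0∞) * ENNReal.ofReal δ
      = ∑ k ∈ hK.toFinset, volume (Ioo ((k : ℝ) * δ) ((k + 1) * δ)) := by
        rw [entropyNum, ncard_eq_toFinset_card _ hK]
        simp [Real.volume_Ioo, add_mul]
    _ = volume (⋃ k ∈ hK.toFinset, Ioo ((k : ℝ) * δ) ((k + 1) * δ)) :=
        (measure_biUnion_finset (hdisj.set_pairwise _) fun _ _ => measurableSet_Ioo).symm
    _ ≤ volume (Metric.thickening δ E) := by
        refine measure_mono (iUnion₂_subset fun k hk x hx => ?_)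
        obtain ⟨y, hyE, hy⟩ := hK.mem_toFinset.1 hk
        refine Metric.mem_thickening_iff.2 ⟨y, hyE, ?_⟩
        rw [Real.dist_eq, abs_sub_lt_iff]
        constructor <;> linarith [hx.1, hx.2, hy.1, hy.2]

lemma thickening_range_subset {t : ℕ → ℝ} (hanti : Antitone t) (hlim : Tendsto t atTop (𝓝 0))
    {δ : ℝ} (hδ : 0 < δ) :
    Metric.thickening δ (range t) ⊆ Icc (-δ) δ ∪ Icc (t 0) (t 0 + δ) ∪
      ⋃ n, (Icc (t n - min (t n - t (n + 1)) δ) (t n) ∪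
        Icc (t (n + 1)) (t (n + 1) + min (t n - t (n + 1)) δ)) := by
  intro x hx
  obtain ⟨_, ⟨m, rfl⟩, hxm⟩ := Metric.mem_thickening_iff.1 hx
  rw [Real.dist_eq, abs_sub_lt_iff] at hxm
  have hm0 := hanti.le_of_tendsto hlim m
  rcases le_or_gt x δ with hxδ | hxδ
  · exact Or.inl (Or.inl ⟨by linarith, hxδ⟩)
  rcases lt_or_ge (t 0) x with hx0 | hx0
  · exact Or.inl (Or.inr ⟨hx0.le, by linarith [hanti (Nat.zero_le m)]⟩)
  obtain ⟨n, hn, hn1⟩ := Nat.exists_not_and_succ_of_not_zero_of_exists (p := fun n => t n < x)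
    (not_lt.2 hx0) (hlim.eventually (gt_mem_nhds (hδ.trans hxδ))).exists
  rw [not_lt] at hn
  refine Or.inr (mem_iUnion.2 ⟨n, ?_⟩)
  rcases le_or_gt m n with hmn | hmn
  · refine Or.inl ⟨sub_le_comm.1 (le_min ?_ ?_), hn⟩ <;> linarith [hanti hmn]
  · refine Or.inr ⟨hn1.le, sub_le_iff_le_add'.1 (le_min ?_ ?_)⟩ <;> linarith [hanti hmn]

lemma volume_thickening_range_le {t : ℕ → ℝ} (hanti : Antitone t)
    (hlim : Tendsto t atTop (𝓝 0)) {δ : ℝ} (hδ : 0 < δ) :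
    volume (Metric.thickening δ (range t)) ≤
      ENNReal.ofReal (3 * δ + 2 * ∑' n, min (t n - t (n + 1)) δ) := by
  have hmin_nonneg (n : ℕ) : 0 ≤ min (t n - t (n + 1)) δ :=
    le_min (sub_nonneg.2 (hanti n.le_succ)) hδ.le
  have hmin : Summable fun n => min (t n - t (n + 1)) δ :=
    (hanti.summable_sub_succ hlim).of_nonneg_of_le hmin_nonneg fun n => min_le_left _ _
  have hS0 : 0 ≤ ∑' n, min (t n - t (n + 1)) δ := tsum_nonneg hmin_nonneg
  refine (measure_mono (thickening_range_subset hanti hlim hδ)).trans <|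
    (measure_union_le _ _).trans <| (add_le_add (measure_union_le _ _)
      ((measure_iUnion_le _).trans (ENNReal.tsum_le_tsum fun n => measure_union_le _ _))).trans ?_
  simp only [Real.volume_Icc, sub_sub_cancel, add_sub_cancel_left, sub_neg_eq_add]
  rw [ENNReal.tsum_add, ← ENNReal.ofReal_tsum_of_nonneg hmin_nonneg hmin,
    ← ENNReal.ofReal_add (by positivity) hδ.le,
    ← ENNReal.ofReal_add hS0 hS0, ← ENNReal.ofReal_add (by positivity) (by positivity)]
  exact ENNReal.ofReal_le_ofReal (by linarith)

lemma entropyNum_range_mul_le {t : ℕ → ℝ} (hanti : Antitone t) (hlim : Tendsto t atTop (𝓝 0))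
    {δ : ℝ} (hδ : 0 < δ) :
    (entropyNum (range t) δ : ℝ) * δ ≤ 3 * δ + 2 * ∑' n, min (t n - t (n + 1)) δ := by
  have hS0 : 0 ≤ ∑' n, min (t n - t (n + 1)) δ :=
    tsum_nonneg fun n => le_min (sub_nonneg.2 (hanti n.le_succ)) hδ.le
  refine (ENNReal.ofReal_le_ofReal_iff (by positivity)).1 ?_
  rw [ENNReal.ofReal_mul (Nat.cast_nonneg _), ENNReal.ofReal_natCast]
  exact (entropyNum_mul_le_volume_thickening _ hδ).trans (volume_thickening_range_le hanti hlim hδ)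

lemma min_le_rpow_mul_rpow {x y a : ℝ} (hx : 0 ≤ x) (hy : 0 ≤ y) (ha₀ : 0 ≤ a) (ha₁ : a ≤ 1) :
    min x y ≤ y ^ (1 - a) * x ^ a := by
  have hm : 0 ≤ min x y := le_min hx hy
  calc min x y = min x y ^ (1 - a) * min x y ^ a := by
        rw [← Real.rpow_add' hm (by norm_num), sub_add_cancel, Real.rpow_one]
    _ ≤ y ^ (1 - a) * x ^ a :=
        mul_le_mul (Real.rpow_le_rpow hm (min_le_right _ _) (sub_nonneg.2 ha₁))
          (Real.rpow_le_rpow hm (min_le_left _ _) ha₀) (by positivity) (by positivity)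

lemma entropyNum_range_le_of_summable_rpow {t : ℕ → ℝ} (hanti : Antitone t)
    (hlim : Tendsto t atTop (𝓝 0)) {a : ℝ} (ha₀ : 0 ≤ a) (ha₁ : a ≤ 1)
    (hS : Summable fun n => (t n - t (n + 1)) ^ a) {δ : ℝ} (hδ : 0 < δ) :
    (entropyNum (range t) δ : ℝ) ≤ 3 + 2 * (∑' n, (t n - t (n + 1)) ^ a) * δ ^ (-a) := by
  have hgap (n : ℕ) : 0 ≤ t n - t (n + 1) := sub_nonneg.2 (hanti n.le_succ)
  have hmin : ∑' n, min (t n - t (n + 1)) δ ≤ δ ^ (1 - a) * ∑' n, (t n - t (n + 1)) ^ a := by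
    rw [← tsum_mul_left]
    exact ((hanti.summable_sub_succ hlim).of_nonneg_of_le (fun n => le_min (hgap n) hδ.le)
      fun n => min_le_left _ _).tsum_le_tsum
      (fun n => min_le_rpow_mul_rpow (hgap n) hδ.le ha₀ ha₁) (hS.mul_left _)
  have hδa : δ ^ (1 - a) = δ * δ ^ (-a) := by
    rw [sub_eq_add_neg, Real.rpow_add hδ, Real.rpow_one]
  refine le_of_mul_le_mul_right ?_ hδ
  calc (entropyNum (range t) δ : ℝ) * δ ≤ 3 * δ + 2 * ∑' n, min (t n - t (n + 1)) δ :=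
        entropyNum_range_mul_le hanti hlim hδ
    _ ≤ 3 * δ + 2 * (δ ^ (1 - a) * ∑' n, (t n - t (n + 1)) ^ a) := by gcongr
    _ = (3 + 2 * (∑' n, (t n - t (n + 1)) ^ a) * δ ^ (-a)) * δ := by rw [hδa]; ring

lemma exists_entropyNum_range_le_rpow {t : ℕ → ℝ} (hanti : Antitone t)
    (hlim : Tendsto t atTop (𝓝 0)) {a : ℝ} (ha : 0 < a)
    (hS : Summable fun n => (t n - t (n + 1)) ^ a) :
    ∃ C : ℝ, 0 < C ∧ ∀ δ ∈ Ioc (0 : ℝ) 1, (entropyNum (range t) δ : ℝ) ≤ C * δ ^ (-a) := by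
  -- the interpolation `min x δ ≤ δ ^ (1 - a) * x ^ a` needs `a ≤ 1`; for `a > 1` use `a = 1`
  set a' := min a 1
  have ha' : 0 ≤ a' := le_min ha.le zero_le_one
  have hS' : Summable fun n => (t n - t (n + 1)) ^ a' := by
    rcases min_cases a 1 with ⟨h, -⟩ | ⟨h, -⟩ <;> simp only [a', h]
    · exact hS
    · simpa using hanti.summable_sub_succ hlim
  set S := ∑' n, (t n - t (n + 1)) ^ a'
  have hS0 : 0 ≤ S := tsum_nonneg fun n => Real.rpow_nonneg (sub_nonneg.2 (hanti n.le_succ)) _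
  refine ⟨3 + 2 * S, by positivity, fun δ ⟨hδ, hδ1⟩ => ?_⟩
  have h1 : 1 ≤ δ ^ (-a') := Real.one_le_rpow_of_pos_of_le_one_of_nonpos hδ hδ1 (neg_nonpos.2 ha')
  have h2 : δ ^ (-a') ≤ δ ^ (-a) :=
    Real.rpow_le_rpow_of_exponent_ge hδ hδ1 (neg_le_neg (min_le_left _ _))
  calc (entropyNum (range t) δ : ℝ) ≤ 3 + 2 * S * δ ^ (-a') :=
        entropyNum_range_le_of_summable_rpow hanti hlim ha' (min_le_right _ _) hS' hδ
    _ ≤ (3 + 2 * S) * δ ^ (-a') := by nlinarith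
    _ ≤ (3 + 2 * S) * δ ^ (-a) := by gcongr

lemma finite_setOf_inter_Icc_nonempty {E : Set ℝ} (hE : BddAbove E) {δ : ℝ} (hδ : 0 < δ) :
    {k : ℕ | (E ∩ Icc (k * δ) ((k + 1) * δ)).Nonempty}.Finite := by
  obtain ⟨M, hM⟩ := hE
  refine (finite_Iic ⌊M / δ⌋₊).subset fun k ⟨x, hxE, hx, _⟩ => Nat.le_floor ?_
  rw [le_div_iff₀ hδ]
  exact hx.trans (hM hxE)

lemma ncard_le_entropyNum {E s : Set ℝ} {δ : ℝ} (hδ : 0 < δ) (hE : BddAbove E) (hsE : s ⊆ E)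
    (hs : ∀ x ∈ s, 0 ≤ x) (hsep : s.Pairwise fun x y => δ ≤ |x - y|) :
    s.ncard ≤ entropyNum E δ := by
  have hfloor (x : ℝ) (hx : 0 ≤ x) : ⌊x / δ⌋₊ * δ ≤ x ∧ x < (⌊x / δ⌋₊ + 1) * δ :=
    ⟨(le_div_iff₀ hδ).1 (Nat.floor_le (div_nonneg hx hδ.le)),
      (div_lt_iff₀ hδ).1 (Nat.lt_floor_add_one _)⟩
  refine ncard_le_ncard_of_injOn (fun x => ⌊x / δ⌋₊) (fun x hx => ?_) (fun x hx y hy hxy => ?_)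
    (finite_setOf_inter_Icc_nonempty hE hδ)
  · exact ⟨x, hsE hx, (hfloor x (hs x hx)).1, (hfloor x (hs x hx)).2.le⟩
  · by_contra hne
    have hx' := hfloor x (hs x hx)
    have hy' := hfloor y (hs y hy)
    simp only [hxy] at hx'
    exact (hsep hx hy hne).not_gt (abs_sub_lt_iff.2 ⟨by linarith, by linarith⟩)

lemma Antitone.le_abs_sub_of_le_sub_succ {t : ℕ → ℝ} (ht : Antitone t) {δ : ℝ} {m n : ℕ}
    (hmn : m ≠ n) (hm : δ ≤ t m - t (m + 1)) (hn : δ ≤ t n - t (n + 1)) :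
    δ ≤ |t m - t n| := by
  rcases hmn.lt_or_gt with h | h
  · exact le_abs.2 (Or.inl (by linarith [ht (Nat.succ_le_of_lt h)]))
  · exact le_abs.2 (Or.inr (by linarith [ht (Nat.succ_le_of_lt h)]))

lemma ncard_setOf_le_sub_succ_le_entropyNum {t : ℕ → ℝ} (hanti : StrictAnti t)
    (hlim : Tendsto t atTop (𝓝 0)) {δ : ℝ} (hδ : 0 < δ) :
    {n | δ ≤ t n - t (n + 1)}.ncard ≤ entropyNum (range t) δ := by
  rw [← ncard_image_of_injective _ hanti.injective]
  refine ncard_le_entropyNum hδ ⟨t 0, ?_⟩ (image_subset_range _ _) ?_ ?_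
  · rintro _ ⟨n, rfl⟩
    exact hanti.antitone (Nat.zero_le n)
  · rintro _ ⟨n, -, rfl⟩
    exact hanti.antitone.le_of_tendsto hlim n
  · rintro _ ⟨m, hm, rfl⟩ _ ⟨n, hn, rfl⟩ hmn
    exact hanti.antitone.le_abs_sub_of_le_sub_succ (ne_of_apply_ne t hmn) hm hn

lemma finite_setOf_le_of_tendsto_zero {u : ℕ → ℝ} (hlim : Tendsto u atTop (𝓝 0)) {δ : ℝ}
    (hδ : 0 < δ) : {n | δ ≤ u n}.Finite := by
  have := hlim.eventually (gt_mem_nhds hδ)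
  rw [← Nat.cofinite_eq_atTop, eventually_cofinite] at this
  simpa only [not_lt] using this

lemma tsum_ite_le_eq_ncard_mul {u : ℕ → ℝ} (hlim : Tendsto u atTop (𝓝 0)) {δ : ℝ} (hδ : 0 < δ)
    (c : ℝ≥0∞) : ∑' n, (if δ ≤ u n then c else 0) = {n | δ ≤ u n}.ncard * c := by
  have hfin := finite_setOf_le_of_tendsto_zero hlim hδ
  rw [← tsum_subtype_eq_of_support_subset (s := {n | δ ≤ u n}) fun n hn => by
      by_contra h; exact hn (if_neg h),
    tsum_congr fun n : {n | δ ≤ u n} => if_pos (show δ ≤ u n from n.2),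
    ENNReal.tsum_set_const, ← hfin.cast_ncard_eq]
  simp

lemma ofReal_min_rpow_le_tsum_dyadic {v b : ℝ} (hv : 0 ≤ v) (hb : 0 < b) :
    ENNReal.ofReal (min v 1 ^ b) ≤
      ∑' j : ℕ, if (1 / 2 : ℝ) ^ (j + 1) ≤ v then ENNReal.ofReal (((1 / 2 : ℝ) ^ j) ^ b)
        else 0 := by
  rcases hv.eq_or_lt with rfl | hv
  · simp [Real.zero_rpow hb.ne']
  have hw : 0 < min v 1 := lt_min hv one_pos
  obtain ⟨j, hj, hj1⟩ := Nat.exists_not_and_succ_of_not_zero_of_exists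
    (p := fun j => (1 / 2 : ℝ) ^ j < min v 1) (by simp) (exists_pow_lt_of_lt_one hw (by norm_num))
  calc ENNReal.ofReal (min v 1 ^ b)
      ≤ ENNReal.ofReal (((1 / 2 : ℝ) ^ j) ^ b) :=
        ENNReal.ofReal_le_ofReal (Real.rpow_le_rpow hw.le (not_lt.1 hj) hb.le)
    _ = if (1 / 2 : ℝ) ^ (j + 1) ≤ v then ENNReal.ofReal (((1 / 2 : ℝ) ^ j) ^ b) else 0 :=
        (if_pos (hj1.le.trans (min_le_left _ _))).symm
    _ ≤ _ := ENNReal.le_tsum j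

lemma summable_rpow_of_ncard_le {u : ℕ → ℝ} {a b C : ℝ} (hu : ∀ n, 0 ≤ u n)
    (hlim : Tendsto u atTop (𝓝 0)) (hb : 0 < b) (hab : a < b)
    (hN : ∀ δ ∈ Ioc (0 : ℝ) 1, ({n | δ ≤ u n}.ncard : ℝ) ≤ C * δ ^ (-a)) :
    Summable fun n => u n ^ b := by
  set q : ℝ := 2 ^ a / 2 ^ b
  have hq : q < 1 :=
    (div_lt_one (by positivity)).2 (Real.rpow_lt_rpow_of_exponent_lt one_lt_two hab)
  have hgeo : Summable fun j : ℕ => C * 2 ^ a * q ^ j :=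
    (summable_geometric_of_lt_one (by positivity) hq).mul_left _
  have hterm (j : ℕ) : ({n | (1 / 2 : ℝ) ^ (j + 1) ≤ u n}.ncard : ℝ≥0∞) *
      ENNReal.ofReal (((1 / 2 : ℝ) ^ j) ^ b) ≤ ENNReal.ofReal (C * 2 ^ a * q ^ j) := by
    rw [← ENNReal.ofReal_natCast, ← ENNReal.ofReal_mul (by positivity)]
    refine ENNReal.ofReal_le_ofReal ?_
    calc _ ≤ C * ((1 / 2 : ℝ) ^ (j + 1)) ^ (-a) * ((1 / 2 : ℝ) ^ j) ^ b :=
          mul_le_mul_of_nonneg_right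
            (hN _ ⟨by positivity, pow_le_one₀ (by norm_num) (by norm_num)⟩) (by positivity)
      _ = C * 2 ^ a * q ^ j := by
          rw [Real.rpow_neg (by positivity), one_div, inv_pow, inv_pow,
            Real.inv_rpow (by positivity), Real.inv_rpow (by positivity), inv_inv,
            ← Real.rpow_pow_comm (by norm_num), ← Real.rpow_pow_comm (by norm_num), div_pow,
            pow_succ]
          field_simp
  have hmin : Summable fun n => min (u n) 1 ^ b := by
    refine (ENNReal.summable_toReal (ne_top_of_le_ne_top hgeo.tsum_ofReal_ne_top ?_)).congr
      fun n => ENNReal.toReal_ofReal (Real.rpow_nonneg (le_min (hu n) zero_le_one) _)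
    calc ∑' n, ENNReal.ofReal (min (u n) 1 ^ b)
        ≤ ∑' n, ∑' j : ℕ, if (1 / 2 : ℝ) ^ (j + 1) ≤ u n then
            ENNReal.ofReal (((1 / 2 : ℝ) ^ j) ^ b) else 0 :=
          ENNReal.tsum_le_tsum fun n => ofReal_min_rpow_le_tsum_dyadic (hu n) hb
      _ = ∑' j : ℕ, ({n | (1 / 2 : ℝ) ^ (j + 1) ≤ u n}.ncard : ℝ≥0∞) *
            ENNReal.ofReal (((1 / 2 : ℝ) ^ j) ^ b) := by
          rw [ENNReal.tsum_comm]
          exact tsum_congr fun j => tsum_ite_le_eq_ncard_mul hlim (by positivity) _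
      _ ≤ ∑' j : ℕ, ENNReal.ofReal (C * 2 ^ a * q ^ j) := ENNReal.tsum_le_tsum hterm
  exact hmin.congr_atTop <| (hlim.eventually (gt_mem_nhds one_pos)).mono fun n hn => by
    simp only [min_eq_left hn.le]

theorem stmt5_general (t : ℕ → ℝ) (hanti : StrictAnti t)
    (hlim : Filter.Tendsto t Filter.atTop (nhds 0)) :
    minkowskiDim (Set.range t) =
      sInf {a : ℝ | 0 < a ∧ Summable fun n : ℕ => (t n - t (n + 1)) ^ a} := by
  refine csInf_eq_csInf_of_subset_of_forall_lt_mem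
    ⟨1, one_pos, by simpa using hanti.antitone.summable_sub_succ hlim⟩
    ⟨0, fun a ha => ha.1.le⟩
    (fun a ⟨ha, hS⟩ => ⟨ha, exists_entropyNum_range_le_rpow hanti.antitone hlim ha hS⟩) ?_
  rintro a ⟨ha, C, -, hC⟩ b hab
  have hgap : Tendsto (fun n => t n - t (n + 1)) atTop (𝓝 0) := by
    simpa using hlim.sub (hlim.comp (tendsto_add_atTop_nat 1))
  exact ⟨ha.trans hab, summable_rpow_of_ncard_le (C := C)
    (fun n => sub_nonneg.2 (hanti.antitone n.le_succ)) hgap (ha.trans hab) hab fun δ hδ =>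
      (Nat.cast_le.2 (ncard_setOf_le_sub_succ_le_entropyNum hanti hlim hδ.1)).trans (hC δ hδ)⟩

theorem stmt5 (t : ℕ → ℝ) (hpos : ∀ n, 0 < t n) (hanti : StrictAnti t)
    (hlim : Filter.Tendsto t Filter.atTop (nhds 0)) :
    minkowskiDim (Set.range t) =
      sInf {a : ℝ | 0 < a ∧ Summable fun n : ℕ => (t n - t (n + 1)) ^ a} :=
  stmt5_general t hanti hlim
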